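/- arXiv:1502.05501 — 6 statements merged into one kernel-verified Lean document; each statement's English description precedes it below -/
import Mathlib

section
/- For any two unifiable constrained literals (L₁; π₁) and (L₂; π₂) over a finite domain D, with σ = mgu(L₁, L₂), the set of ground literals covered by (L₁σ; π₁σ ∧ π₂σ) equals the intersection Gnd(L₁; π₁) ∩ Gnd(L₂; π₂). -/
/-! Basic framework for the Bernays–Schönfinkel fragment: literals over a
signature with predicate symbols `P` (arities `ar`), variables `V` and a finite
domain of constants `D`; dismatching constraints with left-hand-side terms over
`V` and right-hand-side terms over fresh variables `W`. -/

/-- A first-order literal: polarity, predicate symbol and argument tuple of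
terms, each term being a variable (`Sum.inl`) or a constant (`Sum.inr`). -/
structure Lit (P : Type) (ar : P → ℕ) (V D : Type) where
  pol : Bool
  p : P
  args : Fin (ar p) → V ⊕ D

/-- Apply a substitution (mapping variables to terms) to a term. -/
def substT {V V' D : Type} (σ : V → V' ⊕ D) : V ⊕ D → V' ⊕ D :=
  Sum.elim σ Sum.inr

/-- Apply a substitution to a literal. -/
def Lit.subst {P : Type} {ar : P → ℕ} {V V' D : Type}
    (L : Lit P ar V D) (σ : V → V' ⊕ D) : Lit P ar V' D :=
  ⟨L.pol, L.p, fun j => substT σ (L.args j)⟩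

/-- The ground literal obtained from `L` by a grounding substitution `δ`. -/
def Lit.ground {P : Type} {ar : P → ℕ} {V D : Type}
    (L : Lit P ar V D) (δ : V → D) : Lit P ar Empty D :=
  L.subst (fun v => Sum.inr (δ v))

/-- The variables occurring in a literal. -/
def Lit.vars {P : Type} {ar : P → ℕ} {V D : Type} (L : Lit P ar V D) : Set V :=
  {v | ∃ j, L.args j = Sum.inl v}

/-- A dismatching constraint `⋀ᵢ s⃗ᵢ ≠ t⃗ᵢ`: a family of subconstraints indexed by
`ι`, each a pair of term tuples of the same dimension; left-hand sides over
variables `V`, right-hand sides over (fresh) variables `W`. -/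
structure DConstraint (V W D : Type) : Type 1 where
  ι : Type
  dim : ι → ℕ
  lhs : ∀ i, Fin (dim i) → V ⊕ D
  rhs : ∀ i, Fin (dim i) → W ⊕ D

/-- `δ` is a solution of `π` iff for each subconstraint `i`, the grounded
left-hand side `s⃗ᵢδ` is not an instance of the right-hand side `t⃗ᵢ`. -/
def DConstraint.Solution {V W D : Type} (π : DConstraint V W D) (δ : V → D) : Prop :=
  ∀ i, ¬ ∃ ξ : W → D, ∀ j, Sum.elim ξ id (π.rhs i j) = Sum.elim δ id (π.lhs i j)

/-- Apply a substitution to (the left-hand sides of) a constraint. -/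
def DConstraint.subst {V V' W D : Type} (π : DConstraint V W D) (σ : V → V' ⊕ D) :
    DConstraint V' W D :=
  ⟨π.ι, π.dim, fun i j => substT σ (π.lhs i j), π.rhs⟩

/-- Conjunction of two constraints (with variable-disjoint right-hand sides). -/
def DConstraint.and {V W₁ W₂ D : Type} (π₁ : DConstraint V W₁ D)
    (π₂ : DConstraint V W₂ D) : DConstraint V (W₁ ⊕ W₂) D where
  ι := π₁.ι ⊕ π₂.ι
  dim := Sum.elim π₁.dim π₂.dim
  lhs := fun i => match i with
    | .inl i => π₁.lhs i
    | .inr i => π₂.lhs i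
  rhs := fun i => match i with
    | .inl i => fun j => Sum.map Sum.inl id (π₁.rhs i j)
    | .inr i => fun j => Sum.map Sum.inr id (π₂.rhs i j)

/-- The left-hand-side variables of a constraint. -/
def DConstraint.LVar {V W D : Type} (π : DConstraint V W D) : Set V :=
  {v | ∃ i j, π.lhs i j = Sum.inl v}

/-- The set of ground literals covered by the constrained literal `(L; π)`. -/
def Gnd {P : Type} {ar : P → ℕ} {V W D : Type}
    (L : Lit P ar V D) (π : DConstraint V W D) : Set (Lit P ar Empty D) :=
  {g | ∃ δ : V → D, π.Solution δ ∧ g = L.ground δ}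

lemma ground_subst {P : Type} {ar : P → ℕ} {V D : Type}
    (L : Lit P ar V D) (σ : V → V ⊕ D) (δ : V → D) :
    (L.subst σ).ground δ = L.ground (fun v => Sum.elim δ id (σ v)) := by
  simp only [Lit.ground, Lit.subst]
  congr 1
  funext j
  cases h : L.args j with
  | inl v => simp [substT]; cases σ v <;> simp
  | inr c => simp [substT]

lemma elim_map {A B D : Type} (ξ : B → D) (f : A → B) (t : A ⊕ D) :
    Sum.elim ξ id (Sum.map f id t) = Sum.elim (fun a => ξ (f a)) id t := by
  cases t <;> rfl

lemma ground_eq_of_agree {P : Type} {ar : P → ℕ} {V D : Type}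
    (L : Lit P ar V D) (δ δ' : V → D) (h : ∀ v ∈ L.vars, δ v = δ' v) :
    L.ground δ = L.ground δ' := by
  simp only [Lit.ground, Lit.subst]
  congr 1
  funext j
  cases hj : L.args j with
  | inl v => simp [substT, h v ⟨j, hj⟩]
  | inr c => simp [substT]

/-- Conjunction: For any two variable-disjoint constrained literals
`(L₁; π₁)` and `(L₂; π₂)` over a finite domain `D` that are unifiable with most
general unifier `σ` (`L₁σ = L₂σ`, and every unifier factors through `σ`), the set
of ground literals covered by `(L₁σ; π₁σ ∧ π₂σ)` equals
`Gnd(L₁; π₁) ∩ Gnd(L₂; π₂)`. -/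
theorem stmt1 {P V W₁ W₂ D : Type} {ar : P → ℕ} [Fintype D] [Nonempty D]
    (L₁ L₂ : Lit P ar V D)
    (π₁ : DConstraint V W₁ D) (π₂ : DConstraint V W₂ D)
    (hdisj : Disjoint L₁.vars L₂.vars)
    (h₁ : π₁.LVar ⊆ L₁.vars) (h₂ : π₂.LVar ⊆ L₂.vars)
    (σ : V → V ⊕ D)
    (hu : L₁.subst σ = L₂.subst σ)
    (hmgu : ∀ θ : V → V ⊕ D, L₁.subst θ = L₂.subst θ →
      ∃ ρ : V → V ⊕ D, ∀ v, substT ρ (σ v) = θ v) :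
    Gnd (L₁.subst σ) ((π₁.subst σ).and (π₂.subst σ)) = Gnd L₁ π₁ ∩ Gnd L₂ π₂ := by
  ext g
  constructor
  · rintro ⟨δ, hsol, rfl⟩
    set δ' : V → D := fun v => Sum.elim δ id (σ v) with hδ'
    have hg : (L₁.subst σ).ground δ = L₁.ground δ' := ground_subst ..
    have hsub : ∀ t : V ⊕ D, Sum.elim δ id (substT σ t) = Sum.elim δ' id t := by
      intro t; cases t with
      | inl v => simp [substT, hδ']
      | inr c => simp [substT]
    refine ⟨⟨δ', ?_, hg⟩, ⟨δ', ?_, ?_⟩⟩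
    · intro i ⟨ξ, hξ⟩
      refine hsol (Sum.inl i) ⟨Sum.elim ξ fun _ => Classical.arbitrary D, fun j => ?_⟩
      have := hξ j
      simp only [DConstraint.and, DConstraint.subst] at *
      rw [hsub, elim_map]
      simpa using this
    · intro i ⟨ξ, hξ⟩
      refine hsol (Sum.inr i) ⟨Sum.elim (fun _ => Classical.arbitrary D) ξ, fun j => ?_⟩
      have := hξ j
      simp only [DConstraint.and, DConstraint.subst] at *
      rw [hsub, elim_map]
      simpa using this
    · rw [hu, ground_subst]
  · rintro ⟨⟨δ₁, hs₁, rfl⟩, ⟨δ₂, hs₂, hg₂⟩⟩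
    classical
    set δ : V → D := fun v => if v ∈ L₁.vars then δ₁ v else δ₂ v with hδ
    have hag1 : ∀ v ∈ L₁.vars, δ v = δ₁ v := fun v hv => by simp [hδ, hv]
    have hag2 : ∀ v ∈ L₂.vars, δ v = δ₂ v := fun v hv => by
      have : v ∉ L₁.vars := fun hv1 => hdisj.le_bot ⟨hv1, hv⟩
      simp [hδ, this]
    have hgd1 : L₁.ground δ = L₁.ground δ₁ := ground_eq_of_agree _ _ _ hag1
    have hgd2 : L₂.ground δ = L₂.ground δ₂ := ground_eq_of_agree _ _ _ hag2
    have hgeq : L₁.ground δ = L₂.ground δ := by rw [hgd1, hgd2, ← hg₂]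
    have hθ : L₁.subst (fun v => (Sum.inr (δ v) : V ⊕ D)) = L₂.subst (fun v => (Sum.inr (δ v) : V ⊕ D)) := by
      have h1 := congrArg Lit.pol hgeq
      have h2 := congrArg Lit.p hgeq
      simp only [Lit.ground, Lit.subst] at h1 h2 hgeq ⊢
      cases L₁ with | mk p₁ P₁ a₁ => cases L₂ with | mk p₂ P₂ a₂ =>
      dsimp at h1 h2 hgeq ⊢
      subst h1; subst h2
      simp only [Lit.mk.injEq, heq_eq_eq, true_and] at hgeq ⊢
      funext j
      have hj := congrFun hgeq j
      cases ha : a₁ j <;> cases hb : a₂ j <;>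
        simp only [ha, hb, substT, Sum.elim_inl, Sum.elim_inr, Sum.inr.injEq, id] at hj ⊢ <;>
        exact hj
    obtain ⟨ρ, hρ⟩ := hmgu _ hθ
    set dhat : V → D := fun u => Sum.elim (fun _ => Classical.arbitrary D) id (ρ u) with hdhat
    have key : ∀ v, Sum.elim dhat id (σ v) = δ v := by
      intro v
      have := hρ v
      cases hσ : σ v with
      | inl u =>
        simp only [hσ, substT, Sum.elim_inl] at this ⊢
        show Sum.elim (fun _ => Classical.arbitrary D) id (ρ u) = δ v
        rw [this]; rfl
      | inr c =>
        simp only [hσ, substT, Sum.elim_inr] at this ⊢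
        simpa using this
    have hsub : ∀ t : V ⊕ D, Sum.elim dhat id (substT σ t) = Sum.elim δ id t := by
      intro t; cases t with
      | inl v => simp [substT, key v]
      | inr c => simp [substT]
    refine ⟨dhat, ?_, ?_⟩
    · rintro (i | i) ⟨ξ, hξ⟩
      · refine hs₁ i ⟨fun w => ξ (Sum.inl w), fun j => ?_⟩
        have := hξ j
        simp only [DConstraint.and, DConstraint.subst] at this
        rw [hsub] at this
        have hlhs : Sum.elim δ id (π₁.lhs i j) = Sum.elim δ₁ id (π₁.lhs i j) := by
          cases hl : π₁.lhs i j with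
          | inl v => simpa using hag1 v (h₁ ⟨i, j, hl⟩)
          | inr c => simp
        rw [← hlhs]
        rw [elim_map] at this
        simpa using this
      · refine hs₂ i ⟨fun w => ξ (Sum.inr w), fun j => ?_⟩
        have := hξ j
        simp only [DConstraint.and, DConstraint.subst] at this
        rw [hsub] at this
        have hlhs : Sum.elim δ id (π₂.lhs i j) = Sum.elim δ₂ id (π₂.lhs i j) := by
          cases hl : π₂.lhs i j with
          | inl v => simpa using hag2 v (h₂ ⟨i, j, hl⟩)
          | inr c => simp
        rw [← hlhs]
        rw [elim_map] at this
        simpa using this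
    · rw [ground_subst]
      rw [show (fun v => Sum.elim dhat id (σ v)) = δ from funext key, hgd1]
end

section
/- With the same setup, assuming I₂ = {1, …, l}, the family of constrained literals (Lσ_i; π₁σ_i ∧ η₁σ_i ∧ … ∧ η_{i−1}σ_i) for i = 1, …, l covers exactly the difference Gnd(L; π₁) \ Gnd(L; π₂), and moreover the covered ground-literal sets of these constrained literals are pairwise disjoint. -/
/-- Renaming of the variables `V` into the extended variable set `V ⊕ W₂`. -/
def embV {V W₂ D : Type} : V → (V ⊕ W₂) ⊕ D := fun v => Sum.inl (Sum.inl v)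

/-- The constraint `π₁σᵢ ∧ η₁σᵢ ∧ … ∧ η_{i−1}σᵢ`: the substituted copy of `π₁`
together with the substituted copies of the subconstraints `η_j = x⃗_j ≠ t⃗_j`
of `π₂` for `j < i`. -/
def combC {V W₁ W₂ D : Type} (π₁ : DConstraint V W₁ D) {l : ℕ}
    (dim₂ : Fin l → ℕ) (x : ∀ j, Fin (dim₂ j) → V) (t : ∀ j, Fin (dim₂ j) → W₂ ⊕ D)
    (σ : Fin l → (V ⊕ W₂) → (V ⊕ W₂) ⊕ D) (i : Fin l) :
    DConstraint (V ⊕ W₂) (W₁ ⊕ W₂) D where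
  ι := π₁.ι ⊕ {j : Fin l // j < i}
  dim := fun m => match m with
    | .inl m => π₁.dim m
    | .inr j => dim₂ j.1
  lhs := fun m => match m with
    | .inl m => fun r => substT (σ i) (substT embV (π₁.lhs m r))
    | .inr j => fun r => σ i (Sum.inl (x j.1 r))
  rhs := fun m => match m with
    | .inl m => fun r => Sum.map Sum.inl id (π₁.rhs m r)
    | .inr j => fun r => Sum.map Sum.inr id (t j.1 r)

section Aux

variable {P V W₁ W₂ D : Type} {ar : P → ℕ}

/-- `δ` fails the subconstraint `x⃗ ≠ t⃗` (is an instance of its induced subst). -/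
def Fails {n : ℕ} (x : Fin n → V) (tt : Fin n → W₂ ⊕ D) (δ : V → D) : Prop :=
  ∃ ξ : W₂ → D, ∀ r, Sum.elim ξ id (tt r) = δ (x r)

lemma fails_congr {n : ℕ} {x : Fin n → V} {tt : Fin n → W₂ ⊕ D} {δ δ₀ : V → D}
    (h : ∀ r, δ (x r) = δ₀ (x r)) : Fails x tt δ → Fails x tt δ₀ := by
  rintro ⟨ξ, hξ⟩; exact ⟨ξ, fun r => (hξ r).trans (h r)⟩

lemma ground_subst_comp (L : Lit P ar V D) (s : (V ⊕ W₂) → (V ⊕ W₂) ⊕ D)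
    (δ' : V ⊕ W₂ → D) :
    ((L.subst embV).subst s).ground δ' =
      L.ground (fun v => Sum.elim δ' id (s (Sum.inl v))) := by
  simp only [Lit.ground, Lit.subst]
  congr 1
  funext j
  cases h : L.args j with
  | inl v =>
    cases hs : s (Sum.inl v) <;> simp [substT, embV, h, hs]
  | inr d => simp [substT, embV, h]

lemma ground_eq_on_vars {L : Lit P ar V D} {δ δ₀ : V → D}
    (h : L.ground δ = L.ground δ₀) {v : V} {j} (hj : L.args j = Sum.inl v) :
    δ v = δ₀ v := by
  simp only [Lit.ground, Lit.subst, Lit.mk.injEq, heq_eq_eq, true_and] at h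
  have := congrFun h j
  rw [hj] at this
  simpa [substT] using this

lemma key_elim {l : ℕ} {dim₂ : Fin l → ℕ} {x : ∀ j, Fin (dim₂ j) → V}
    {t : ∀ j, Fin (dim₂ j) → W₂ ⊕ D}
    {σ : Fin l → (V ⊕ W₂) → (V ⊕ W₂) ⊕ D}
    (hσ1 : ∀ i r, σ i (Sum.inl (x i r)) = Sum.map Sum.inr id (t i r))
    (hσ2 : ∀ i u, (∀ r, Sum.inl (x i r) ≠ u) → σ i u = Sum.inl u)
    {i : Fin l} {δ : V → D} {ξ : W₂ → D}
    (hfail : ∀ r, Sum.elim ξ id (t i r) = δ (x i r)) (v : V) :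
    Sum.elim (Sum.elim δ ξ) id (σ i (Sum.inl v)) = δ v := by
  by_cases h : ∃ r, x i r = v
  · obtain ⟨r, rfl⟩ := h
    rw [hσ1, ← hfail r]
    cases t i r <;> simp
  · rw [hσ2 i (Sum.inl v) (fun r h' => h ⟨r, Sum.inl.inj h'⟩)]
    simp

/-- Characterisation of the covered set of the `i`-th constrained literal. -/
lemma cover_char [Nonempty D] (L : Lit P ar V D) (π₁ : DConstraint V W₁ D) {l : ℕ}
    (dim₂ : Fin l → ℕ) (x : ∀ j, Fin (dim₂ j) → V) (t : ∀ j, Fin (dim₂ j) → W₂ ⊕ D)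
    (σ : Fin l → (V ⊕ W₂) → (V ⊕ W₂) ⊕ D)
    (hσ1 : ∀ i r, σ i (Sum.inl (x i r)) = Sum.map Sum.inr id (t i r))
    (hσ2 : ∀ i u, (∀ r, Sum.inl (x i r) ≠ u) → σ i u = Sum.inl u)
    (i : Fin l) (g : Lit P ar Empty D) :
    g ∈ Gnd ((L.subst embV).subst (σ i)) (combC π₁ dim₂ x t σ i) ↔
      ∃ δ : V → D, g = L.ground δ ∧ π₁.Solution δ ∧ Fails (x i) (t i) δ ∧
        ∀ j : Fin l, j < i → ¬ Fails (x j) (t j) δ := by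
  constructor
  · rintro ⟨δ', sol, hg⟩
    set δ : V → D := fun v => Sum.elim δ' id (σ i (Sum.inl v)) with hδ
    have hlhs : ∀ s : V ⊕ D,
        Sum.elim δ' id (substT (σ i) (substT embV s)) = Sum.elim δ id s := by
      intro s; cases s <;> simp [substT, embV, hδ]
    refine ⟨δ, ?_, ?_, ?_, ?_⟩
    · rw [hg, ground_subst_comp]
    · rintro m ⟨ξ, hξ⟩
      refine sol (Sum.inl m) ⟨Sum.elim ξ (fun w => δ' (Sum.inr w)), fun r => ?_⟩
      show Sum.elim _ id (Sum.map Sum.inl id (π₁.rhs m r))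
          = Sum.elim δ' id (substT (σ i) (substT embV (π₁.lhs m r)))
      rw [hlhs, ← hξ r]
      cases π₁.rhs m r <;> simp
    · refine ⟨fun w => δ' (Sum.inr w), fun r => ?_⟩
      have : δ (x i r) = Sum.elim δ' id (Sum.map Sum.inr id (t i r)) := by
        rw [hδ]; simp only [hσ1]
      rw [this]
      cases t i r <;> simp
    · rintro j hj ⟨ξ, hξ⟩
      refine sol (Sum.inr ⟨j, hj⟩)
        ⟨Sum.elim (fun _ => Classical.arbitrary D) ξ, fun r => ?_⟩
      show Sum.elim _ id (Sum.map Sum.inr id (t j r))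
          = Sum.elim δ' id (σ i (Sum.inl (x j r)))
      have h1 : Sum.elim δ' id (σ i (Sum.inl (x j r))) = δ (x j r) := rfl
      rw [h1, ← hξ r]
      cases t j r <;> simp
  · rintro ⟨δ, hg, sol, ⟨ξ, hξ⟩, hmin⟩
    have key := key_elim hσ1 hσ2 hξ
    refine ⟨Sum.elim δ ξ, ?_, ?_⟩
    · rintro (m | ⟨j, hj⟩)
      · rintro ⟨ξ', hξ'⟩
        refine sol m ⟨fun w => ξ' (Sum.inl w), fun r => ?_⟩
        have h1 : Sum.elim ξ' id (Sum.map Sum.inl id (π₁.rhs m r))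
            = Sum.elim (Sum.elim δ ξ) id (substT (σ i) (substT embV (π₁.lhs m r))) :=
          hξ' r
        have h2 : Sum.elim (Sum.elim δ ξ) id
            (substT (σ i) (substT embV (π₁.lhs m r))) = Sum.elim δ id (π₁.lhs m r) := by
          cases hc : π₁.lhs m r <;> simp [substT, embV, key]
        rw [h2] at h1
        rw [← h1]
        cases π₁.rhs m r <;> simp
      · rintro ⟨ξ', hξ'⟩
        refine hmin j hj ⟨fun w => ξ' (Sum.inr w), fun r => ?_⟩
        have h1 : Sum.elim ξ' id (Sum.map Sum.inr id (t j r))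
            = Sum.elim (Sum.elim δ ξ) id (σ i (Sum.inl (x j r))) :=
          hξ' r
        have h2 : Sum.elim (Sum.elim δ ξ) id (σ i (Sum.inl (x j r))) = δ (x j r) :=
          key (x j r)
        rw [h2] at h1
        rw [← h1]
        cases t j r <;> simp
    · rw [ground_subst_comp, hg]
      congr 1
      funext v
      exact (key v).symm

end Aux

/-- With the setup of the difference lemma and `I₂ = {1,…,l}` (here
`Fin l`), the family of constrained literals
`(Lσᵢ; π₁σᵢ ∧ η₁σᵢ ∧ … ∧ η_{i−1}σᵢ)`, `i = 1,…,l`, still covers exactly the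
difference `Gnd(L; π₁) \ Gnd(L; π₂)`, and moreover the covered ground-literal
sets of these constrained literals are pairwise disjoint. -/
theorem stmt3 {P V W₁ W₂ D : Type} {ar : P → ℕ} [Fintype D] [Nonempty D]
    (L : Lit P ar V D)
    (π₁ : DConstraint V W₁ D) {l : ℕ}
    (dim₂ : Fin l → ℕ) (x : ∀ j, Fin (dim₂ j) → V) (t : ∀ j, Fin (dim₂ j) → W₂ ⊕ D)
    -- `π₂ = ⋀_{j<l} x⃗_j ≠ t⃗_j`, in normal form:
    (h₁ : π₁.LVar ⊆ L.vars)
    (h₂ : (DConstraint.mk (Fin l) dim₂ (fun j r => Sum.inl (x j r)) t).LVar ⊆ L.vars)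
    (hinj : ∀ j, Function.Injective (x j))
    -- `σ i` is the induced substitution of the `i`-th subconstraint of `π₂`:
    (σ : Fin l → (V ⊕ W₂) → (V ⊕ W₂) ⊕ D)
    (hσ1 : ∀ i r, σ i (Sum.inl (x i r)) = Sum.map Sum.inr id (t i r))
    (hσ2 : ∀ i u, (∀ r, Sum.inl (x i r) ≠ u) → σ i u = Sum.inl u) :
    ((⋃ i : Fin l, Gnd ((L.subst embV).subst (σ i)) (combC π₁ dim₂ x t σ i))
        = Gnd L π₁ \ Gnd L (DConstraint.mk (Fin l) dim₂ (fun j r => Sum.inl (x j r)) t)) ∧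
    (∀ i i' : Fin l, i ≠ i' →
      Disjoint (Gnd ((L.subst embV).subst (σ i)) (combC π₁ dim₂ x t σ i))
        (Gnd ((L.subst embV).subst (σ i')) (combC π₁ dim₂ x t σ i'))) := by
  classical
  -- agreement on the variables of the `i`-th subconstraint
  have hagree : ∀ (i : Fin l) {δ δ₀ : V → D}, L.ground δ = L.ground δ₀ →
      ∀ r, δ (x i r) = δ₀ (x i r) := by
    intro i δ δ₀ hgr r
    obtain ⟨j, hj⟩ := h₂ (show x i r ∈ DConstraint.LVar _ from ⟨i, r, rfl⟩)
    exact ground_eq_on_vars hgr hj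
  have char := cover_char L π₁ dim₂ x t σ hσ1 hσ2
  constructor
  · ext g
    simp only [Set.mem_iUnion, Set.mem_diff]
    constructor
    · rintro ⟨i, hi⟩
      obtain ⟨δ, hg, sol, hfail, -⟩ := (char i g).1 hi
      refine ⟨⟨δ, sol, hg⟩, ?_⟩
      rintro ⟨δ₀, sol₀, hg₀⟩
      have hfail₀ : Fails (x i) (t i) δ₀ :=
        fails_congr (hagree i (hg ▸ hg₀ ▸ rfl)) hfail
      obtain ⟨ξ, hξ⟩ := hfail₀
      exact sol₀ i ⟨ξ, fun r => hξ r⟩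
    · rintro ⟨⟨δ, sol, hg⟩, hng⟩
      have hex : ∃ i : Fin l, Fails (x i) (t i) δ := by
        by_contra h
        push_neg at h
        exact hng ⟨δ, fun i hi => h i (by obtain ⟨ξ, hξ⟩ := hi; exact ⟨ξ, hξ⟩), hg⟩
      obtain ⟨i₀, hi₀⟩ := hex
      obtain ⟨i, hi, hmin⟩ := Finset.exists_min_image
        (Finset.univ.filter (fun i => Fails (x i) (t i) δ)) id
        ⟨i₀, by simp [hi₀]⟩
      simp only [Finset.mem_filter, Finset.mem_univ, true_and] at hi
      refine ⟨i, (char i g).2 ⟨δ, hg, sol, hi, fun j hj hfj => ?_⟩⟩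
      have := hmin j (by simp [hfj])
      exact absurd hj (not_lt.2 this)
  · intro i i' hne
    rw [Set.disjoint_left]
    intro g hg hg'
    obtain ⟨δ, hgd, -, hfail, hmin⟩ := (char i g).1 hg
    obtain ⟨δ', hgd', -, hfail', hmin'⟩ := (char i' g).1 hg'
    have hgr : L.ground δ = L.ground δ' := hgd ▸ hgd' ▸ rfl
    rcases lt_trichotomy i i' with h | h | h
    · exact hmin' i h (fails_congr (hagree i hgr) hfail)
    · exact hne h
    · exact hmin i' h (fails_congr (fun r => (hagree i' hgr r).symm) hfail')
end

section
/- Higman's lemma for a finite alphabet: for every infinite sequence w₁, w₂, … of finite words over a finite alphabet, there exist indices i < j such that w_i embeds into w_j (w_i is obtained from w_j by deleting some letters). -/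
/-! Equality on a finite alphabet is a well-quasi-order by pigeonhole, and Mathlib's Higman lemma
lifts a well-quasi-order `r` on letters to `List.SublistForall₂ r` on words, which for `r = (· = ·)`
is the subsequence order. -/

theorem List.sublistForall₂_eq_iff_sublist {α : Type*} {l₁ l₂ : List α} :
    List.SublistForall₂ (· = ·) l₁ l₂ ↔ l₁.Sublist l₂ := by
  simp only [List.sublistForall₂_iff, List.forall₂_eq_eq_eq, exists_eq_left']

theorem WellQuasiOrdered.sublistForall₂ {α : Type*} {r : α → α → Prop} [IsPreorder α r]
    (h : WellQuasiOrdered r) : WellQuasiOrdered (List.SublistForall₂ r) := by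
  have hpwo := (Set.partiallyWellOrderedOn_univ_iff.mpr h).partiallyWellOrderedOn_sublistForall₂ r
  simpa only [Set.mem_univ, implies_true, Set.ofPred_true,
    Set.partiallyWellOrderedOn_univ_iff] using hpwo

theorem List.wellQuasiOrdered_sublist {α : Type*} [Finite α] :
    WellQuasiOrdered (@List.Sublist α) := by
  intro f
  simpa only [List.sublistForall₂_eq_iff_sublist] using
    (Finite.wellQuasiOrdered (α := α) (· = ·)).sublistForall₂ f

/-- Higman's lemma for a finite alphabet: for every infinite
sequence `w₁, w₂, …` of finite words over a finite alphabet `A`, there are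
indices `i < j` such that `w i` embeds into `w j`, i.e. `w i` is a (not
necessarily contiguous) subsequence of `w j`. -/
theorem stmt10 {A : Type*} [Finite A] (w : ℕ → List A) :
    ∃ i j, i < j ∧ (w i).Sublist (w j) :=
  List.wellQuasiOrdered_sublist w
end

section
/- For every blocked decision (L; π) with blocking clause C (over a finite domain D), there exists a ground literal L' ∈ Gnd(L; π) such that the decision (L'; ⊤) is not blocked by C and is not empty. In particular, any decision covering exactly one ground literal is never blocked. -/
/-- A constrained literal, semantically: a polarity together with the set of
ground atoms it covers; its covered ground literals all carry this polarity. -/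
structure SCLit (GA : Type) where
  pol : Bool
  atoms : Set GA

/-- The set of ground literals (polarity × atom) covered by a constrained literal. -/
def SCLit.Gnd {GA : Type} (ℓ : SCLit GA) : Set (Bool × GA) :=
  {g | g.1 = ℓ.pol ∧ g.2 ∈ ℓ.atoms}

/-- A ground atom is defined by the trail `Γ` iff some constrained literal of `Γ`
covers it. -/
def definedAtom {GA : Type} (Γ : List (SCLit GA)) (a : GA) : Prop :=
  ∃ ℓ ∈ Γ, a ∈ ℓ.atoms

/-- A ground literal is false under `Γ` iff its complement is covered by some
constrained literal of `Γ`. -/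
def falseLit {GA : Type} (Γ : List (SCLit GA)) (g : Bool × GA) : Prop :=
  ∃ ℓ ∈ Γ, (!g.1, g.2) ∈ ℓ.Gnd

/-- The decision `dec` is blocked in the trail `Γ` by the clause `C` (given by the
set of its ground instances, each a set of ground literals): `dec` is undefined in
`Γ` and some ground instance `Cg` of `C` is false under `Γ, dec` and contains two
distinct literals `L₁ ≠ L₂` whose complements both lie in `Gnd(dec)`. -/
def Blocked {GA : Type} (Γ : List (SCLit GA)) (C : Set (Set (Bool × GA)))
    (dec : SCLit GA) : Prop :=
  (∀ g ∈ dec.Gnd, ¬ definedAtom Γ g.2) ∧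
  ∃ Cg ∈ C, (∀ g ∈ Cg, falseLit (Γ ++ [dec]) g) ∧
    ∃ L₁ ∈ Cg, ∃ L₂ ∈ Cg, L₁ ≠ L₂ ∧
      (!L₁.1, L₁.2) ∈ dec.Gnd ∧ (!L₂.1, L₂.2) ∈ dec.Gnd

lemma not_blocked_of_unique {GA : Type} (Γ : List (SCLit GA))
    (C : Set (Set (Bool × GA))) (dec : SCLit GA)
    (h : ∃! g, g ∈ dec.Gnd) : ¬ Blocked Γ C dec := by
  rintro ⟨-, Cg, -, -, L₁, hL₁, L₂, hL₂, hne, h₁, h₂⟩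
  obtain ⟨g, -, hu⟩ := h
  have e1 := hu _ h₁
  have e2 := hu _ h₂
  apply hne
  have : (!L₁.1, L₁.2) = (!L₂.1, L₂.2) := e1.trans e2.symm
  obtain ⟨hb, ha⟩ := Prod.mk.injEq .. ▸ this
  exact Prod.ext (Bool.not_inj hb) ha

/-- For every blocked decision `(L; π)` with blocking clause `C`,
there is a ground literal `L' ∈ Gnd(L; π)` such that the (singleton) decision
`(L'; ⊤)` is not blocked by `C` and is not empty.  In particular, any decision
covering exactly one ground literal is never blocked. -/
theorem stmt14 {GA : Type} (Γ : List (SCLit GA)) :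
    (∀ (C : Set (Set (Bool × GA))) (dec : SCLit GA), Blocked Γ C dec →
      ∃ g ∈ dec.Gnd, ¬ Blocked Γ C ⟨g.1, {g.2}⟩ ∧
        (SCLit.Gnd ⟨g.1, ({g.2} : Set GA)⟩).Nonempty) ∧
    (∀ (C : Set (Set (Bool × GA))) (dec : SCLit GA),
      (∃! g, g ∈ dec.Gnd) → ¬ Blocked Γ C dec) := by
  constructor
  · rintro C dec ⟨-, Cg, -, -, L₁, hL₁, -, -, -, h₁, -⟩
    refine ⟨(!L₁.1, L₁.2), h₁, ?_, ⟨(!L₁.1, L₁.2), rfl, rfl⟩⟩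
    apply not_blocked_of_unique
    refine ⟨(!L₁.1, L₁.2), ⟨rfl, rfl⟩, ?_⟩
    rintro g ⟨hb, ha⟩
    exact Prod.ext hb ha
  · exact not_blocked_of_unique Γ
end

section
/- Normal form rule soundness (constant–variable rule): over any domain, for tuples s⃗₁, s⃗₂ of terms, constant a, variable x not occurring on the left-hand side, and tuples t⃗₁, t⃗₂, the atomic constraint (s⃗₁, a, s⃗₂) ≠ (t⃗₁, x, t⃗₂) has exactly the same solutions as (s⃗₁, s⃗₂) ≠ (t⃗₁, t⃗₂)σ where σ = {x ← a}. Likewise (s⃗₁, a, s⃗₂) ≠ (t⃗₁, b, t⃗₂) with distinct constants a ≠ b is equivalent to ⊤ (satisfied by every assignment). -/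
/-- Substitution `{x ← a}` on a right-hand-side term over variables `W` and
constants `D`. -/
def substX {W D : Type} [DecidableEq W] (x : W) (a : D) : W ⊕ D → W ⊕ D
  | Sum.inl w => if w = x then Sum.inr a else Sum.inl w
  | Sum.inr d => Sum.inr d

/-- Normal form rule soundness.  A ground assignment `δ` over the
left-hand-side variables is a solution of `s⃗ ≠ t⃗` iff `s⃗δ` is not an instance
of `t⃗` (no grounding `ξ` of the right-hand-side variables makes `t⃗ξ = s⃗δ`).
(1) Constant–variable rule: `(s⃗₁, a, s⃗₂) ≠ (t⃗₁, x, t⃗₂)` has exactly the same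
solutions as `(s⃗₁, s⃗₂) ≠ (t⃗₁, t⃗₂)σ` with `σ = {x ← a}`.
(2) `(s⃗₁, a, s⃗₂) ≠ (t⃗₁, b, t⃗₂)` with distinct constants `a ≠ b` is equivalent
to `⊤`: every assignment is a solution. -/
theorem stmt18 {V W D : Type} [DecidableEq W]
    {p q : ℕ} (s₁ : Fin p → V ⊕ D) (s₂ : Fin q → V ⊕ D)
    (t₁ : Fin p → W ⊕ D) (t₂ : Fin q → W ⊕ D) (a b : D) (x : W) :
    (∀ δ : V → D,
      ((¬ ∃ ξ : W → D,
          (∀ i, Sum.elim ξ id (t₁ i) = Sum.elim δ id (s₁ i)) ∧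
          Sum.elim ξ id (Sum.inl x : W ⊕ D) = Sum.elim δ id (Sum.inr a : V ⊕ D) ∧
          (∀ i, Sum.elim ξ id (t₂ i) = Sum.elim δ id (s₂ i))) ↔
       (¬ ∃ ξ : W → D,
          (∀ i, Sum.elim ξ id (substX x a (t₁ i)) = Sum.elim δ id (s₁ i)) ∧
          (∀ i, Sum.elim ξ id (substX x a (t₂ i)) = Sum.elim δ id (s₂ i))))) ∧
    (a ≠ b → ∀ δ : V → D,
      ¬ ∃ ξ : W → D,
          (∀ i, Sum.elim ξ id (t₁ i) = Sum.elim δ id (s₁ i)) ∧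
          Sum.elim ξ id (Sum.inr b : W ⊕ D) = Sum.elim δ id (Sum.inr a : V ⊕ D) ∧
          (∀ i, Sum.elim ξ id (t₂ i) = Sum.elim δ id (s₂ i))) := by
  constructor
  · intro δ
    apply not_congr
    constructor
    · rintro ⟨ξ, h1, hx, h2⟩
      simp at hx
      refine ⟨ξ, fun i => ?_, fun i => ?_⟩ <;>
      · first
        | (rw [← h1 i]; cases h : t₁ i with
           | inl w => by_cases hw : w = x <;> simp [substX, hw, hx]
           | inr d => simp [substX])
        | (rw [← h2 i]; cases h : t₂ i with
           | inl w => by_cases hw : w = x <;> simp [substX, hw, hx]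
           | inr d => simp [substX])
    · rintro ⟨ξ, h1, h2⟩
      refine ⟨Function.update ξ x a, fun i => ?_, by simp, fun i => ?_⟩ <;>
      · first
        | (rw [← h1 i]; cases h : t₁ i with
           | inl w => by_cases hw : w = x <;> simp [substX, hw, Function.update]
           | inr d => simp [substX])
        | (rw [← h2 i]; cases h : t₂ i with
           | inl w => by_cases hw : w = x <;> simp [substX, hw, Function.update]
           | inr d => simp [substX])
  · rintro hab δ ⟨ξ, _, hx, _⟩
    simp at hx
    exact hab hx.symm
end

section
/- Matching rule soundness: if the right-hand side tuple t⃗ of an atomic constraint s⃗ ≠ t⃗ can be matched against s⃗ (i.e., s⃗ = t⃗μ for some substitution μ of the right-hand variables) and s⃗ consists of distinct variables disjoint from Var(t⃗), then the constraint s⃗ ≠ t⃗ has no solution: for every grounding δ of the variables of s⃗, s⃗δ is an instance of t⃗. -/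
/-- Matching rule soundness.  Let `s⃗` be a tuple of pairwise
distinct variables from `V` and `t⃗` a tuple of terms over right-hand-side
variables `W` (disjoint from `V`) and constants `D`.  If `t⃗` can be matched
against `s⃗`, i.e. `t⃗μ = s⃗` for some substitution `μ : W → V ⊕ D` of the
right-hand variables, then the constraint `s⃗ ≠ t⃗` has no solution: for every
grounding `δ : V → D`, the tuple `s⃗δ` is an instance of `t⃗`. -/
theorem stmt19 {V W D : Type} {k : ℕ}
    (s : Fin k → V) (hs : Function.Injective s)
    (t : Fin k → W ⊕ D) (μ : W → V ⊕ D)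
    (hmatch : ∀ j, Sum.elim μ Sum.inr (t j) = Sum.inl (s j)) :
    (∀ δ : V → D, ∃ ξ : W → D, ∀ j, Sum.elim ξ id (t j) = δ (s j)) ∧
    ¬ ∃ δ : V → D, ¬ ∃ ξ : W → D, ∀ j, Sum.elim ξ id (t j) = δ (s j) := by
  have main : ∀ δ : V → D, ∃ ξ : W → D, ∀ j, Sum.elim ξ id (t j) = δ (s j) := by
    intro δ
    refine ⟨fun w => Sum.elim δ id (μ w), fun j => ?_⟩
    have h := hmatch j
    cases ht : t j with
    | inl w =>
      simp only [ht, Sum.elim_inl] at h ⊢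
      rw [h]; rfl
    | inr d =>
      rw [ht] at h
      simp at h
  exact ⟨main, fun ⟨δ, hδ⟩ => hδ (main δ)⟩
end
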